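/- For every ℓ ≥ 2 and any two distinct vectors x, y ∈ {0,1}^n, the single-deletion balls of their ℓ-read vectors intersect in at most one element: |D(Tr(x)) ∩ D(Tr(y))| ≤ 1. Consequently, any x ∈ {0,1}^n is uniquely determined by any two distinct elements of D(Tr(x)). -/

import Mathlib

/-- The ℓ-read vector of a binary vector `x` (as a list of Booleans): its entry at 0-based
index `i` (1-indexed `i+1`) is the Hamming weight of the window of `ℓ` consecutive
coordinates of `x` ending at 1-indexed position `i+1`, with out-of-range coordinates taken
to be `0` (`false`). -/
def readVec (ℓ : ℕ) (x : List Bool) : List ℕ :=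
  (List.range (x.length + ℓ - 1)).map fun i =>
    (((List.replicate (ℓ - 1) false ++ x ++ List.replicate (ℓ - 1) false).drop i).take ℓ).count true

/-- The single-deletion ball: all vectors obtained from `u` by deleting exactly one symbol. -/
def delBall {α : Type*} (u : List α) : Set (List α) :=
  { v | ∃ i < u.length, v = u.eraseIdx i }

/-!
Write entry `k` of `Tr(x)` as the weight `W_x(k)` of the zero-padded window `x_{k-ℓ+1}, …, x_k`
(0-based), so that `W_x(k+1) - W_x(k) = x_{k+1} - x_{k+1-ℓ}`. A common element of the two balls,
obtained by deleting entry `a` of `Tr(x)` and entry `b ≥ a` of `Tr(y)`, says that `Tr(x)` and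
`Tr(y)` agree left of `a` and right of `b` and that `Tr(x)` is `Tr(y)` shifted by one in between.
For arbitrary lists `u ≠ v`, two such pairs `a ≤ b`, `a' ≤ b'` delete from `u` inside a constant
run, hence give the same element; and `Tr(x) ≠ Tr(y)` because `W_x - W_y` equals `x_p - y_p` at
the first index `p` where `x` and `y` differ.
A pair `a ≤ b` together with a pair `b' ≤ a'` is impossible: between them `W_x - W_y` alternates
in sign, but at `q + ℓ - 1`, with `q` the last index where `x` and `y` differ, it equals
`x_q - y_q = ±1` while its step there is `-(x_{q-1} - y_{q-1})`, of absolute value at most `1`.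
-/

namespace List

variable {α : Type*}

theorem getElem?_eq_of_eraseIdx_eq_eraseIdx {u v : List α} {a b : ℕ} (hab : a ≤ b)
    (h : u.eraseIdx a = v.eraseIdx b) :
    (∀ k < a, u[k]? = v[k]?) ∧ (∀ k, a ≤ k → k < b → u[k + 1]? = v[k]?) ∧
      (∀ k, b < k → u[k]? = v[k]?) := by
  have H (k : ℕ) := congrArg (·[k]?) h
  simp only [getElem?_eraseIdx] at H
  refine ⟨fun k hk => ?_, fun k hk hk' => ?_, fun k hk => ?_⟩
  · simpa [hk, hk.trans_le hab] using H k
  · simpa [hk.not_gt, hk'] using H k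
  · simpa [show ¬ k - 1 < a by omega, show ¬ k - 1 < b by omega,
      Nat.sub_add_cancel (show 1 ≤ k by omega)] using H (k - 1)

theorem eraseIdx_eq_eraseIdx_of_getElem?_succ {l : List α} {a a' : ℕ} (haa' : a ≤ a')
    (h : ∀ k, a ≤ k → k < a' → l[k + 1]? = l[k]?) : l.eraseIdx a = l.eraseIdx a' := by
  refine ext_getElem? fun k => ?_
  simp only [getElem?_eraseIdx]
  split_ifs with h₁ h₂ h₂
  · rfl
  · omega
  · exact h k (by omega) h₂
  · rfl

theorem eraseIdx_eq_eraseIdx_of_le_of_le {u v : List α} {a b a' b' : ℕ} (huv : u ≠ v)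
    (hab : a ≤ b) (hab' : a' ≤ b') (h : u.eraseIdx a = v.eraseIdx b)
    (h' : u.eraseIdx a' = v.eraseIdx b') : u.eraseIdx a = u.eraseIdx a' := by
  wlog haa' : a ≤ a' generalizing a b a' b'
  · exact (this hab' hab h' h (by omega)).symm
  obtain ⟨-, hmid, hright⟩ := getElem?_eq_of_eraseIdx_eq_eraseIdx hab h
  obtain ⟨hleft', -, -⟩ := getElem?_eq_of_eraseIdx_eq_eraseIdx hab' h'
  by_cases hba' : b < a'
  · refine absurd (ext_getElem? fun k => ?_) huv
    rcases le_or_gt k b with hk | hk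
    exacts [hleft' k (by omega), hright k hk]
  · exact eraseIdx_eq_eraseIdx_of_getElem?_succ haa' fun k hk hk' => by
      rw [hmid k hk (by omega), hleft' k hk']

theorem count_take_drop_eq_sum [DecidableEq α] (l : List α) (a : α) (i L : ℕ) :
    ((l.drop i).take L).count a = ∑ t ∈ Finset.range L, if l[i + t]? = some a then 1 else 0 := by
  induction L with
  | zero => simp
  | succ L ih =>
    rw [take_add_one, count_append, ih, Finset.sum_range_succ, getElem?_drop]
    rcases l[i + L]? with _ | b
    · simp
    · by_cases hb : b = a <;> simp [hb]

end List

def paddedBit (x : List Bool) (j : ℤ) : ℤ :=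
  if 0 ≤ j ∧ x[j.toNat]? = some true then 1 else 0

def windowWeight (ℓ : ℕ) (x : List Bool) (k : ℤ) : ℤ :=
  ∑ t ∈ Finset.range ℓ, paddedBit x (k + t + 1 - ℓ)

theorem paddedBit_eq_zero_or_one (x : List Bool) (j : ℤ) :
    paddedBit x j = 0 ∨ paddedBit x j = 1 := by
  unfold paddedBit; split_ifs <;> simp

theorem paddedBit_of_neg (x : List Bool) {j : ℤ} (hj : j < 0) : paddedBit x j = 0 :=
  if_neg fun h => by omega

theorem paddedBit_of_length_le {x : List Bool} {j : ℤ} (hj : x.length ≤ j) :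
    paddedBit x j = 0 := by
  rw [paddedBit, if_neg]
  rintro ⟨-, h⟩
  rw [List.getElem?_eq_none (by omega)] at h
  cases h

theorem paddedBit_natCast_sub (x : List Bool) (r m : ℕ) :
    paddedBit x ((m : ℤ) - r) =
      if (List.replicate r false ++ x ++ List.replicate r false)[m]? = some true then 1 else 0 := by
  simp only [paddedBit, List.append_assoc, List.getElem?_append, List.length_replicate,
    List.getElem?_replicate]
  by_cases hm : m < r
  · simp [hm]
  · have : ((m : ℤ) - r).toNat = m - r := by omega
    have h0 : (0 : ℤ) ≤ m - r := by omega
    simp only [hm, this, h0, true_and, if_false]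
    split_ifs <;> simp_all

theorem windowWeight_eq_getD_readVec (ℓ : ℕ) (x : List Bool) (k : ℕ) :
    windowWeight ℓ x k = ((readVec ℓ x)[k]?.getD 0 : ℕ) := by
  by_cases hk : k < x.length + ℓ - 1
  · simp only [readVec, List.getElem?_map, List.getElem?_range hk, Option.map_some,
      Option.getD_some, List.count_take_drop_eq_sum, Nat.cast_sum, windowWeight]
    refine Finset.sum_congr rfl fun t ht => ?_
    rw [Finset.mem_range] at ht
    rw [Nat.cast_ite, Nat.cast_one, Nat.cast_zero, ← paddedBit_natCast_sub]
    congr 1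
    omega
  · rw [List.getElem?_eq_none (by simpa [readVec] using hk)]
    refine Finset.sum_eq_zero fun t ht => paddedBit_of_length_le ?_
    rw [Finset.mem_range] at ht
    omega

theorem windowWeight_succ_sub (ℓ : ℕ) (x : List Bool) (k : ℤ) :
    windowWeight ℓ x (k + 1) - windowWeight ℓ x k =
      paddedBit x (k + 1) - paddedBit x (k + 1 - ℓ) := by
  have h₁ := Finset.sum_range_succ (fun t : ℕ => paddedBit x (k + t + 1 - ℓ)) ℓ
  have h₂ := Finset.sum_range_succ' (fun t : ℕ => paddedBit x (k + t + 1 - ℓ)) ℓ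
  simp only [Nat.cast_add, Nat.cast_one, Nat.cast_zero, add_zero,
    show k + ℓ + 1 - ℓ = k + 1 by ring,
    show ∀ t : ℤ, k + (t + 1) + 1 - ℓ = k + 1 + t + 1 - ℓ from fun t => by ring] at h₁ h₂
  rw [windowWeight, windowWeight]
  linarith

theorem windowWeight_eq_of_getElem?_eq {ℓ : ℕ} {x y : List Bool} {i j : ℕ}
    (h : (readVec ℓ x)[i]? = (readVec ℓ y)[j]?) : windowWeight ℓ x i = windowWeight ℓ y j := by
  rw [windowWeight_eq_getD_readVec, windowWeight_eq_getD_readVec, h]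

theorem paddedBit_ne_imp {x y : List Bool} (hlen : x.length = y.length) {j : ℤ}
    (hj : paddedBit x j ≠ paddedBit y j) : 0 ≤ j ∧ j < x.length := by
  by_contra hout
  rcases not_and_or.1 hout with h | h
  · exact hj (by rw [paddedBit_of_neg x (by omega), paddedBit_of_neg y (by omega)])
  · exact hj (by rw [paddedBit_of_length_le (by omega), paddedBit_of_length_le (by omega)])

theorem exists_paddedBit_ne {x y : List Bool} (hlen : x.length = y.length) (hne : x ≠ y) :
    ∃ i : ℕ, paddedBit x i ≠ paddedBit y i := by
  obtain ⟨i, hi⟩ : ∃ i, x[i]? ≠ y[i]? := by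
    by_contra! h
    exact hne (List.ext_getElem? h)
  have hix : i < x.length := by
    by_contra hix
    exact hi (by rw [List.getElem?_eq_none (by omega), List.getElem?_eq_none (by omega)])
  refine ⟨i, ?_⟩
  simp only [paddedBit, Nat.cast_nonneg, true_and, Int.toNat_natCast,
    List.getElem?_eq_getElem hix, List.getElem?_eq_getElem (hlen ▸ hix), Option.some.injEq] at hi ⊢
  revert hi
  cases x[i] <;> cases y[i] <;> decide

theorem exists_paddedBit_ne_first_last {x y : List Bool} (hlen : x.length = y.length)
    (hne : x ≠ y) : ∃ p q : ℕ, paddedBit x p ≠ paddedBit y p ∧ paddedBit x q ≠ paddedBit y q ∧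
      ∀ j : ℤ, paddedBit x j ≠ paddedBit y j → p ≤ j ∧ j ≤ q := by
  set S := (Finset.range x.length).filter fun j : ℕ => paddedBit x j ≠ paddedBit y j
  have hS : ∀ j : ℤ, paddedBit x j ≠ paddedBit y j → j.toNat ∈ S ∧ (j.toNat : ℤ) = j := by
    intro j hj
    obtain ⟨h0, hn⟩ := paddedBit_ne_imp hlen hj
    refine ⟨Finset.mem_filter.2 ⟨Finset.mem_range.2 (by omega), ?_⟩, by omega⟩
    rwa [Int.toNat_of_nonneg h0]
  have hSne : S.Nonempty := by
    obtain ⟨i, hi⟩ := exists_paddedBit_ne hlen hne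
    exact ⟨i, (hS i hi).1⟩
  refine ⟨S.min' hSne, S.max' hSne, (Finset.mem_filter.1 (S.min'_mem hSne)).2,
    (Finset.mem_filter.1 (S.max'_mem hSne)).2, fun j hj => ?_⟩
  obtain ⟨hjS, hj⟩ := hS j hj
  rw [← hj]
  exact ⟨by exact_mod_cast S.min'_le _ hjS, by exact_mod_cast S.le_max' _ hjS⟩

theorem windowWeight_sub_of_diff_ge {ℓ : ℕ} (hℓ : 1 ≤ ℓ) {x y : List Bool} {p : ℤ}
    (h : ∀ j, paddedBit x j ≠ paddedBit y j → p ≤ j) :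
    windowWeight ℓ x p - windowWeight ℓ y p = paddedBit x p - paddedBit y p := by
  rw [windowWeight, windowWeight, ← Finset.sum_sub_distrib,
    Finset.sum_eq_single_of_mem (ℓ - 1) (Finset.mem_range.2 (by omega)) fun t ht htne => ?_]
  · rw [show p + ((ℓ - 1 : ℕ) : ℤ) + 1 - ℓ = p by omega]
  · rw [Finset.mem_range] at ht
    rw [sub_eq_zero]
    by_contra hne
    have := h _ hne
    omega

theorem windowWeight_sub_of_diff_le {ℓ : ℕ} (hℓ : 1 ≤ ℓ) {x y : List Bool} {q : ℤ}
    (h : ∀ j, paddedBit x j ≠ paddedBit y j → j ≤ q) :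
    windowWeight ℓ x (q + ℓ - 1) - windowWeight ℓ y (q + ℓ - 1) =
      paddedBit x q - paddedBit y q := by
  rw [windowWeight, windowWeight, ← Finset.sum_sub_distrib,
    Finset.sum_eq_single_of_mem 0 (Finset.mem_range.2 (by omega)) fun t _ htne => ?_]
  · rw [show q + ℓ - 1 + ((0 : ℕ) : ℤ) + 1 - ℓ = q by omega]
  · rw [sub_eq_zero]
    by_contra hne
    have := h _ hne
    omega

theorem readVec_inj_of_length_eq {ℓ : ℕ} (hℓ : 1 ≤ ℓ) {x y : List Bool}
    (hlen : x.length = y.length) (h : readVec ℓ x = readVec ℓ y) : x = y := by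
  by_contra hne
  obtain ⟨p, _, hp, -, hpq⟩ := exists_paddedBit_ne_first_last hlen hne
  have hdiff := windowWeight_sub_of_diff_ge (ℓ := ℓ) hℓ fun j hj => (hpq j hj).1
  rw [windowWeight_eq_of_getElem?_eq (congrArg (·[p]?) h), sub_self] at hdiff
  exact hp (sub_eq_zero.1 hdiff.symm)

theorem mem_Icc_of_windowWeight_ne {ℓ : ℕ} {x y : List Bool} {a b : ℕ} (hab : a ≤ b)
    (h : (readVec ℓ x).eraseIdx a = (readVec ℓ y).eraseIdx b) {i : ℕ}
    (hi : windowWeight ℓ x i ≠ windowWeight ℓ y i) :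
    i ∈ Set.Icc a b := by
  obtain ⟨hleft, -, hright⟩ := List.getElem?_eq_of_eraseIdx_eq_eraseIdx hab h
  by_contra hout
  rcases not_and_or.1 hout with hia | hbi
  · exact hi (windowWeight_eq_of_getElem?_eq (hleft i (by omega)))
  · exact hi (windowWeight_eq_of_getElem?_eq (hright i (by omega)))

theorem windowWeight_succ_eq {ℓ : ℕ} {x y : List Bool} {a b : ℕ} (hab : a ≤ b)
    (h : (readVec ℓ x).eraseIdx a = (readVec ℓ y).eraseIdx b) {k : ℕ} (hak : a ≤ k)
    (hkb : k < b) :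
    windowWeight ℓ x (k + 1) = windowWeight ℓ y k := by
  obtain ⟨-, hmid, -⟩ := List.getElem?_eq_of_eraseIdx_eq_eraseIdx hab h
  exact_mod_cast windowWeight_eq_of_getElem?_eq (hmid k hak hkb)

theorem readVec_eraseIdx_ne_of_le_of_ge {ℓ : ℕ} (hℓ : 2 ≤ ℓ) {x y : List Bool}
    (hlen : x.length = y.length) (hne : x ≠ y) {a b a' b' : ℕ} (hab : a ≤ b) (hba' : b' ≤ a')
    (h : (readVec ℓ x).eraseIdx a = (readVec ℓ y).eraseIdx b) :
    (readVec ℓ x).eraseIdx a' ≠ (readVec ℓ y).eraseIdx b' := by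
  intro h'
  obtain ⟨p, q, hp, hq, hpq⟩ := exists_paddedBit_ne_first_last hlen hne
  have hpq' : p ≤ q := by exact_mod_cast (hpq q hq).1
  obtain ⟨M, hM⟩ : ∃ M : ℕ, q + ℓ = M + 2 := ⟨q + ℓ - 2, by omega⟩
  have hFp := windowWeight_sub_of_diff_ge (ℓ := ℓ) (by omega) fun j hj => (hpq j hj).1
  have hFN := windowWeight_sub_of_diff_le (ℓ := ℓ) (by omega) fun j hj => (hpq j hj).2
  rw [show (q : ℤ) + ℓ - 1 = ((M + 1 : ℕ) : ℤ) by omega] at hFN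
  obtain ⟨hap, -⟩ := mem_Icc_of_windowWeight_ne hab h (i := p) (by omega)
  obtain ⟨hb'p, -⟩ := mem_Icc_of_windowWeight_ne hba' h'.symm (i := p) (by omega)
  obtain ⟨-, hMb⟩ := mem_Icc_of_windowWeight_ne hab h (i := M + 1) (by omega)
  obtain ⟨-, hMa'⟩ := mem_Icc_of_windowWeight_ne hba' h'.symm (i := M + 1) (by omega)
  have hx := windowWeight_succ_eq hab h (k := M) (by omega) (by omega)
  have hy := windowWeight_succ_eq hba' h'.symm (k := M) (by omega) (by omega)
  have hsx := windowWeight_succ_sub ℓ x M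
  have hsy := windowWeight_succ_sub ℓ y M
  have hlast : paddedBit x (M + 1) = paddedBit y (M + 1) := by
    by_contra hne'
    have := (hpq _ hne').2
    omega
  push_cast at hFN
  rw [show (M : ℤ) + 1 - ℓ = q - 1 by omega] at hsx hsy
  rcases paddedBit_eq_zero_or_one x q with h1 | h1 <;>
    rcases paddedBit_eq_zero_or_one y q with h2 | h2 <;>
    rcases paddedBit_eq_zero_or_one x (q - 1) with h3 | h3 <;>
    rcases paddedBit_eq_zero_or_one y (q - 1) with h4 | h4 <;>
    omega

theorem delBall_readVec_inter_subsingleton {ℓ : ℕ} (hℓ : 2 ≤ ℓ) {x y : List Bool}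
    (hlen : x.length = y.length) (hne : x ≠ y) :
    (delBall (readVec ℓ x) ∩ delBall (readVec ℓ y)).Subsingleton := by
  have huv : readVec ℓ x ≠ readVec ℓ y := fun h =>
    hne (readVec_inj_of_length_eq (by omega) hlen h)
  rintro _ ⟨⟨a, -, rfl⟩, b, -, h⟩ _ ⟨⟨a', -, rfl⟩, b', -, h'⟩
  rcases le_total a b with hab | hba <;> rcases le_total a' b' with hab' | hba'
  · exact List.eraseIdx_eq_eraseIdx_of_le_of_le huv hab hab' h h'
  · exact absurd h' (readVec_eraseIdx_ne_of_le_of_ge hℓ hlen hne hab hba' h)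
  · exact absurd h (readVec_eraseIdx_ne_of_le_of_ge hℓ hlen hne hab' hba h')
  · rw [h, h', List.eraseIdx_eq_eraseIdx_of_le_of_le huv.symm hba hba' h.symm h'.symm]

/-- For every `ℓ ≥ 2` and any two distinct `x, y ∈ {0,1}ⁿ`, the
single-deletion balls of their `ℓ`-read vectors intersect in at most one element:
`|D(Tr(x)) ∩ D(Tr(y))| ≤ 1`. Consequently, any `x ∈ {0,1}ⁿ` is uniquely determined by any
two distinct elements of `D(Tr(x))`. -/
theorem del_readVec_intersection_le_one (ℓ n : ℕ) (hℓ : 2 ≤ ℓ) :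
    (∀ x y : List Bool, x.length = n → y.length = n → x ≠ y →
      (delBall (readVec ℓ x) ∩ delBall (readVec ℓ y)).ncard ≤ 1) ∧
    (∀ x y : List Bool, x.length = n → y.length = n →
      ∀ R R' : List ℕ, R ≠ R' →
        R ∈ delBall (readVec ℓ x) → R' ∈ delBall (readVec ℓ x) →
        R ∈ delBall (readVec ℓ y) → R' ∈ delBall (readVec ℓ y) → x = y) := by
  refine ⟨fun x y hx hy hne => ?_, fun x y hx hy R R' hRR' hRx hR'x hRy hR'y => ?_⟩
  · have hs := delBall_readVec_inter_subsingleton hℓ (hx.trans hy.symm) hne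
    exact (Set.ncard_le_one hs.finite).2 hs
  · by_contra hne
    exact hRR' (delBall_readVec_inter_subsingleton hℓ (hx.trans hy.symm) hne
      ⟨hRx, hRy⟩ ⟨hR'x, hR'y⟩)
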